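/- Let M be an alternative O-bimodule over the octonions. Then the set of associative elements A(M) = {x ∈ M : [p,q,x] = 0 for all p,q ∈ O} equals the communicating center Z(M) = {x ∈ M : px = xp for all p ∈ O}. -/

import Mathlib

/-! If `x` is associative, the bimodule identities give `(q·x)·p = q·(x·p)` and
`(x·p)·q = x·(p·q)`; pushing `[p,q,r]·x` through them turns it into `x·[p,q,r]`. Hence
`{p | p·x = x·p}` is a subspace of `𝕆` containing `1` and every associator, and the
associators of `𝕆` span its imaginary part. Conversely, for central `x` the identities
`[p,q,x] = [q,x,p] = [x,p,q]` and `[q,p,x] = [p,x,q] = [x,q,p]` combine linearly to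
`3·[p,q,x] = 0`. -/

noncomputable section

open scoped Quaternion

/-- The octonions, built from pairs of quaternions via the Cayley–Dickson construction. -/
def Octonion : Type := ℍ[ℝ] × ℍ[ℝ]

namespace Octonion

def mk' (a b : ℍ[ℝ]) : Octonion := Prod.mk a b
def q1 (x : Octonion) : ℍ[ℝ] := Prod.fst x
def q2 (x : Octonion) : ℍ[ℝ] := Prod.snd x

instance : AddCommGroup Octonion := inferInstanceAs (AddCommGroup (ℍ[ℝ] × ℍ[ℝ]))
instance : Module ℝ Octonion := inferInstanceAs (Module ℝ (ℍ[ℝ] × ℍ[ℝ]))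
instance : One Octonion := ⟨mk' 1 0⟩
instance : Mul Octonion :=
  ⟨fun x y => mk' (q1 x * q1 y - star (q2 y) * q2 x) (q2 y * q1 x + q2 x * star (q1 y))⟩

/-- Octonion conjugation. -/
def conj (x : Octonion) : Octonion := mk' (star (q1 x)) (-(q2 x))

/-- The real part of an octonion. -/
def re (x : Octonion) : ℝ := (q1 x).re

/-- The standard basis `e 0 = 1, e 1, …, e 7` of the octonions. -/
def e : Fin 8 → Octonion :=
  ![mk' 1 0, mk' ⟨0,1,0,0⟩ 0, mk' ⟨0,0,1,0⟩ 0, mk' ⟨0,0,0,1⟩ 0,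
    mk' 0 1, mk' 0 ⟨0,1,0,0⟩, mk' 0 ⟨0,0,1,0⟩, mk' 0 ⟨0,0,0,1⟩]

/-- The coordinates of an octonion with respect to the standard basis. -/
def coord (x : Octonion) : Fin 8 → ℝ :=
  ![(q1 x).re, (q1 x).imI, (q1 x).imJ, (q1 x).imK,
    (q2 x).re, (q2 x).imI, (q2 x).imJ, (q2 x).imK]

end Octonion

section AlternativeBimodule

variable {𝕜 A M : Type*} [CommRing 𝕜] [Mul A] [AddCommGroup A] [Module 𝕜 A]
  [AddCommGroup M] [Module 𝕜 M]

/-- `L p m = p·m` and `R p m = m·p`; the fields say `[p,q,m] = [q,m,p]` and `[q,m,p] = [m,p,q]`. -/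
structure IsAlternativeBimodule (L R : A →ₗ[𝕜] M →ₗ[𝕜] M) : Prop where
  left_eq_middle : ∀ p q m, L (p * q) m - L p (L q m) = R p (L q m) - L q (R p m)
  middle_eq_right : ∀ p q m, R p (L q m) - L q (R p m) = R q (R p m) - R (p * q) m

namespace IsAlternativeBimodule

variable {L R : A →ₗ[𝕜] M →ₗ[𝕜] M} {x : M}

theorem right_left_comm_of_left_assoc (h : IsAlternativeBimodule L R)
    (hx : ∀ p q, L (p * q) x = L p (L q x)) (p q : A) : R p (L q x) = L q (R p x) := by
  have := h.left_eq_middle p q x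
  rwa [hx, sub_self, eq_comm, sub_eq_zero] at this

theorem right_mul_of_left_assoc (h : IsAlternativeBimodule L R)
    (hx : ∀ p q, L (p * q) x = L p (L q x)) (p q : A) : R q (R p x) = R (p * q) x := by
  have := h.middle_eq_right p q x
  rwa [h.right_left_comm_of_left_assoc hx, sub_self, eq_comm, sub_eq_zero] at this

theorem left_associator_eq_right_of_left_assoc (h : IsAlternativeBimodule L R)
    (hx : ∀ p q, L (p * q) x = L p (L q x)) (p q r : A) :
    L (p * q * r - p * (q * r)) x = R (p * q * r - p * (q * r)) x := by
  have hRL := h.right_left_comm_of_left_assoc hx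
  have hRR := h.right_mul_of_left_assoc hx
  simp only [map_sub, LinearMap.sub_apply]
  calc L (p * q * r) x - L (p * (q * r)) x
      = L (p * q) (L r x) - L p (L q (L r x)) := by rw [hx (p * q) r, hx p (q * r), hx q r]
    _ = R p (L q (L r x)) - L q (R p (L r x)) := h.left_eq_middle p q (L r x)
    _ = L (q * r) (R p x) - L q (L r (R p x)) := by rw [← hx q r, hRL p (q * r), hRL p r]
    _ = R q (L r (R p x)) - L r (R q (R p x)) := h.left_eq_middle q r (R p x)
    _ = R r (R q (R p x)) - R (q * r) (R p x) := h.middle_eq_right q r (R p x)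
    _ = R (p * q * r) x - R (p * (q * r)) x := by rw [hRR p q, hRR (p * q) r, hRR p (q * r)]

theorem left_assoc_of_left_eq_right [Invertible (3 : 𝕜)] (h : IsAlternativeBimodule L R)
    (hx : ∀ p, L p x = R p x) (p q : A) : L (p * q) x = L p (L q x) := by
  have hpq := h.left_eq_middle p q x
  have hpq' := h.middle_eq_right p q x
  have hqp := h.left_eq_middle q p x
  have hqp' := h.middle_eq_right q p x
  simp only [← hx] at hpq hpq' hqp hqp'
  have h3 : (3 : 𝕜) • (L (p * q) x - L p (L q x)) = 0 := by
    linear_combination (norm := module) hpq + (2 : 𝕜) • hpq' - hqp + hqp'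
  exact sub_eq_zero.mp ((isUnit_of_invertible (3 : 𝕜)).smul_eq_zero.mp h3)

end IsAlternativeBimodule

end AlternativeBimodule

namespace Octonion

@[ext]
theorem ext {x y : Octonion} (h₁ : x.1 = y.1) (h₂ : x.2 = y.2) : x = y := Prod.ext h₁ h₂

@[simp] theorem fst_mk' (a b : ℍ[ℝ]) : (mk' a b).1 = a := rfl
@[simp] theorem snd_mk' (a b : ℍ[ℝ]) : (mk' a b).2 = b := rfl
@[simp] theorem fst_add (x y : Octonion) : (x + y).1 = x.1 + y.1 := rfl
@[simp] theorem snd_add (x y : Octonion) : (x + y).2 = x.2 + y.2 := rfl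
@[simp] theorem fst_sub (x y : Octonion) : (x - y).1 = x.1 - y.1 := rfl
@[simp] theorem snd_sub (x y : Octonion) : (x - y).2 = x.2 - y.2 := rfl
@[simp] theorem fst_smul (r : ℝ) (x : Octonion) : (r • x).1 = r • x.1 := rfl
@[simp] theorem snd_smul (r : ℝ) (x : Octonion) : (r • x).2 = r • x.2 := rfl
@[simp] theorem fst_mul (x y : Octonion) : (x * y).1 = x.1 * y.1 - star y.2 * x.2 := rfl
@[simp] theorem snd_mul (x y : Octonion) : (x * y).2 = y.2 * x.1 + x.2 * star y.1 := rfl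

/-- The literal `⟨a, b, c, d⟩` inside `e` has type `ℍ[ℝ,-1,0,-1]`, which `simp` does not
identify with `ℍ[ℝ]`; restating `e` through `quat` lets `simp` compute with it. -/
def quat (a b c d : ℝ) : ℍ[ℝ] := ⟨a, b, c, d⟩

@[simp] theorem re_quat (a b c d : ℝ) : (quat a b c d).re = a := rfl
@[simp] theorem imI_quat (a b c d : ℝ) : (quat a b c d).imI = b := rfl
@[simp] theorem imJ_quat (a b c d : ℝ) : (quat a b c d).imJ = c := rfl
@[simp] theorem imK_quat (a b c d : ℝ) : (quat a b c d).imK = d := rfl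

@[simp] theorem e_zero : e 0 = mk' 1 0 := rfl
@[simp] theorem e_one : e 1 = mk' (quat 0 1 0 0) 0 := rfl
@[simp] theorem e_two : e 2 = mk' (quat 0 0 1 0) 0 := rfl
@[simp] theorem e_three : e 3 = mk' (quat 0 0 0 1) 0 := rfl
@[simp] theorem e_four : e 4 = mk' 0 1 := rfl
@[simp] theorem e_five : e 5 = mk' 0 (quat 0 1 0 0) := rfl
@[simp] theorem e_six : e 6 = mk' 0 (quat 0 0 1 0) := rfl
@[simp] theorem e_seven : e 7 = mk' 0 (quat 0 0 0 1) := rfl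

theorem sum_coord_smul_e (x : Octonion) : ∑ i, coord x i • e i = x := by
  ext <;> simp [Fin.sum_univ_eight, coord, q1, q2]

theorem exists_associator_eq_two_smul_e {i : Fin 8} (hi : i ≠ 0) :
    ∃ p q r : Octonion, p * q * r - p * (q * r) = (2 : ℝ) • e i := by
  fin_cases i <;> simp only [Fin.reduceFinMk] at hi ⊢
  · exact absurd rfl hi
  · exact ⟨e 4, e 2, e 7, by ext <;> norm_num⟩
  · exact ⟨e 1, e 4, e 7, by ext <;> norm_num⟩
  · exact ⟨e 4, e 1, e 6, by ext <;> norm_num⟩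
  · exact ⟨e 2, e 1, e 7, by ext <;> norm_num⟩
  · exact ⟨e 1, e 2, e 6, by ext <;> norm_num⟩
  · exact ⟨e 2, e 1, e 5, by ext <;> norm_num⟩
  · exact ⟨e 1, e 2, e 4, by ext <;> norm_num⟩

theorem span_one_associators :
    Submodule.span ℝ (insert 1 {a : Octonion | ∃ p q r, a = p * q * r - p * (q * r)}) = ⊤ := by
  set S := Submodule.span ℝ (insert 1 {a : Octonion | ∃ p q r, a = p * q * r - p * (q * r)})
  have he : ∀ i, e i ∈ S := by
    intro i
    by_cases hi : i = 0
    · exact hi ▸ Submodule.subset_span (Set.mem_insert 1 _)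
    obtain ⟨p, q, r, h⟩ := exists_associator_eq_two_smul_e hi
    refine (S.smul_mem_iff (two_ne_zero : (2 : ℝ) ≠ 0)).mp ?_
    exact h ▸ Submodule.subset_span (Set.mem_insert_of_mem 1 ⟨p, q, r, rfl⟩)
  refine eq_top_iff.mpr fun x _ => ?_
  rw [← sum_coord_smul_e x]
  exact S.sum_mem fun i _ => S.smul_mem _ (he i)

end Octonion

open Octonion in
theorem octonion_bimodule_associative_eq_center_general
    {M : Type*} [AddCommGroup M] [Module ℝ M]
    (L R : Octonion →ₗ[ℝ] M →ₗ[ℝ] M)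
    (hL1 : ∀ m : M, L 1 m = m) (hR1 : ∀ m : M, R 1 m = m)
    -- `[p,q,m] = [q,m,p]`
    (hLM : ∀ (p q : Octonion) (m : M),
      L (p * q) m - L p (L q m) = R p (L q m) - L q (R p m))
    -- `[q,m,p] = [m,p,q]`
    (hMR : ∀ (p q : Octonion) (m : M),
      R p (L q m) - L q (R p m) = R q (R p m) - R (p * q) m) :
    {x : M | ∀ p q : Octonion, L (p * q) x = L p (L q x)}
      = {x : M | ∀ p : Octonion, L p x = R p x} := by
  have h : IsAlternativeBimodule L R := ⟨hLM, hMR⟩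
  ext x
  refine ⟨fun hx => ?_, h.left_assoc_of_left_eq_right⟩
  have hLR : L.flip x = R.flip x := LinearMap.ext_on span_one_associators <| by
    rintro _ (rfl | ⟨p, q, r, rfl⟩)
    · simp [hL1, hR1]
    · exact h.left_associator_eq_right_of_left_assoc hx p q r
  exact LinearMap.congr_fun hLR

open Octonion in
/-- In an alternative `𝕆`-bimodule `M` (with `M = 𝕆·A(M)`), the set of
associative elements `A(M)` equals the communicating center
`Z(M) = {x : px = xp ∀ p}`. -/
theorem octonion_bimodule_associative_eq_center
    {M : Type*} [AddCommGroup M] [Module ℝ M]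
    (L R : Octonion →ₗ[ℝ] M →ₗ[ℝ] M)
    (hL1 : ∀ m : M, L 1 m = m) (hR1 : ∀ m : M, R 1 m = m)
    -- `[p,q,m] = [q,m,p]`
    (hLM : ∀ (p q : Octonion) (m : M),
      L (p * q) m - L p (L q m) = R p (L q m) - L q (R p m))
    -- `[q,m,p] = [m,p,q]`
    (hMR : ∀ (p q : Octonion) (m : M),
      R p (L q m) - L q (R p m) = R q (R p m) - R (p * q) m)
    -- `M = 𝕆 · A(M)`
    (hspan : ∀ m : M, m ∈ Submodule.span ℝ
      {y : M | ∃ (p : Octonion) (x : M),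
        (∀ a b : Octonion, L (a * b) x = L a (L b x)) ∧ y = L p x}) :
    {x : M | ∀ p q : Octonion, L (p * q) x = L p (L q x)}
      = {x : M | ∀ p : Octonion, L p x = R p x} :=
  octonion_bimodule_associative_eq_center_general L R hL1 hR1 hLM hMR
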